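/- arXiv:2502.06076 — 6 statements merged into one kernel-verified Lean document; each statement's English description precedes it below -/
import Mathlib

section
/- Let θ ∈ (0,1) and let N be a positive integer with N ≤ 1/(4θ(1−θ)) − 1. Then there exists a temperature τ̃ > 0 such that (∫₀¹ ∂_θ h_{τ̃}(u,θ) du + 2)² + (1/N)·Var_{U~Uniform[0,1]}(∂_θ h_{τ̃}(U,θ)) < (1/N)·(1/(θ(1−θ)) − 4); that is, the mean squared error of the N-sample Smoothed-Autodiff estimator with temperature τ̃ is strictly smaller than the mean squared error of the N-sample REINFORCE estimator. -/
open Real Filter MeasureTheory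

/-- The smoothed reparameterization `h_τ(u, θ)`. -/
noncomputable def hSm (τ u θ : ℝ) : ℝ :=
  (Real.exp ((u - θ) / τ) - 1) / (Real.exp ((u - θ) / τ) + 1)

/-- The θ-partial derivative `∂_θ h_τ(u, θ)`. -/
noncomputable def dhSm (τ u θ : ℝ) : ℝ :=
  -(2 / τ) * Real.exp ((u - θ) / τ) / (Real.exp ((u - θ) / τ) + 1) ^ 2

/-- Mean of `∂_θ h_τ(U, θ)` for `U ~ Uniform[0,1]`. -/
noncomputable def meanDh (τ θ : ℝ) : ℝ := ∫ u in (0:ℝ)..1, dhSm τ u θ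

/-- Variance of `∂_θ h_τ(U, θ)` for `U ~ Uniform[0,1]`. -/
noncomputable def varDh (τ θ : ℝ) : ℝ :=
  (∫ u in (0:ℝ)..1, (dhSm τ u θ) ^ 2) - (meanDh τ θ) ^ 2

/-! The `N`-sample REINFORCE MSE is at least `4` as soon as `N ≤ 1/(4p) − 1` with `p = θ(1−θ)`.
At `τ = 1` the integrand `∂_θ h_1(u, θ) = −2eˣ/(eˣ + 1)²`, `x = u − θ ∈ [−1, 1]`, lies in
`[−1/2, −1/4]`, so its mean lies there too and its variance is at most `1/4`; the
Smoothed-Autodiff MSE is then at most `(7/4)² + 1/4 < 4`. -/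

theorem four_le_one_div_mul_one_div_sub_four {N p : ℝ} (hN : 0 < N)
    (hNle : N ≤ 1 / (4 * p) - 1) : 4 ≤ 1 / N * (1 / p - 4) := by
  have hp : 1 / p = 4 * (1 / (4 * p)) := by ring
  rw [one_div_mul_eq_div, le_div_iff₀ hN]
  linarith

theorem continuous_dhSm (τ θ : ℝ) : Continuous fun u => dhSm τ u θ := by
  unfold dhSm
  exact Continuous.div (by fun_prop) (by fun_prop) fun u => by positivity

section Bounds

variable {τ : ℝ}

theorem dhSm_eq_neg_one_div_mul (τ u θ : ℝ) :
    dhSm τ u θ = -(1 / τ) * (2 * Real.exp ((u - θ) / τ) / (Real.exp ((u - θ) / τ) + 1) ^ 2) := by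
  unfold dhSm
  ring

theorem dhSm_nonpos (hτ : 0 ≤ τ) (u θ : ℝ) : dhSm τ u θ ≤ 0 := by
  rw [dhSm_eq_neg_one_div_mul]
  exact mul_nonpos_of_nonpos_of_nonneg (neg_nonpos.2 (by positivity)) (by positivity)

theorem neg_one_div_two_mul_le_dhSm (hτ : 0 < τ) (u θ : ℝ) :
    -(1 / (2 * τ)) ≤ dhSm τ u θ := by
  set g := Real.exp ((u - θ) / τ)
  have hg : 0 < g := Real.exp_pos _
  have hkernel : 2 * g / (g + 1) ^ 2 ≤ 1 / 2 := by
    rw [div_le_iff₀ (by positivity)]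
    nlinarith [sq_nonneg (g - 1)]
  calc -(1 / (2 * τ)) = -(1 / τ) * (1 / 2) := by ring
    _ ≤ -(1 / τ) * (2 * g / (g + 1) ^ 2) :=
        mul_le_mul_of_nonpos_left hkernel (neg_nonpos.2 (one_div_pos.2 hτ).le)
    _ = dhSm τ u θ := (dhSm_eq_neg_one_div_mul τ u θ).symm

theorem dhSm_le_neg_one_div_four_mul (hτ : 0 < τ) {u θ : ℝ} (h : |u - θ| ≤ τ) :
    dhSm τ u θ ≤ -(1 / (4 * τ)) := by
  have hs : |(u - θ) / τ| ≤ 1 := by rwa [abs_div, abs_of_pos hτ, div_le_one hτ]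
  set s := (u - θ) / τ
  set g := Real.exp s
  have hg_le : g < 3 :=
    (Real.exp_le_exp.2 (le_abs_self s |>.trans hs)).trans_lt Real.exp_one_lt_three
  have hg_ge : 1 < 3 * g := by
    calc (1 : ℝ) = Real.exp 1 * Real.exp (-1) := by rw [← Real.exp_add]; norm_num
      _ < 3 * g := mul_lt_mul Real.exp_one_lt_three
          (Real.exp_le_exp.2 (neg_le_of_abs_le hs)) (Real.exp_pos _) (by norm_num)
  -- `(g + 1)² ≤ 8 g` holds for `g ∈ [3 − 2√2, 3 + 2√2] ⊇ [1/3, 3]`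
  have hkernel : 1 / 4 ≤ 2 * g / (g + 1) ^ 2 := by
    rw [le_div_iff₀ (by positivity)]
    nlinarith
  calc dhSm τ u θ = -(1 / τ) * (2 * g / (g + 1) ^ 2) := dhSm_eq_neg_one_div_mul τ u θ
    _ ≤ -(1 / τ) * (1 / 4) :=
        mul_le_mul_of_nonpos_left hkernel (neg_nonpos.2 (one_div_pos.2 hτ).le)
    _ = -(1 / (4 * τ)) := by ring

theorem neg_one_div_two_mul_le_meanDh (hτ : 0 < τ) (θ : ℝ) : -(1 / (2 * τ)) ≤ meanDh τ θ := by
  simpa [meanDh] using intervalIntegral.integral_mono_on zero_le_one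
    (intervalIntegrable_const (μ := volume)) ((continuous_dhSm τ θ).intervalIntegrable 0 1)
    fun u _ => neg_one_div_two_mul_le_dhSm hτ u θ

theorem meanDh_le_neg_one_div_four_mul (hτ : 1 ≤ τ) {θ : ℝ} (hθ : θ ∈ Set.Icc (0 : ℝ) 1) :
    meanDh τ θ ≤ -(1 / (4 * τ)) := by
  have hdist (u : ℝ) (hu : u ∈ Set.Icc (0 : ℝ) 1) : |u - θ| ≤ τ :=
    (abs_sub_le_iff.2 ⟨by linarith [hu.2, hθ.1], by linarith [hu.1, hθ.2]⟩).trans hτ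
  simpa [meanDh] using intervalIntegral.integral_mono_on zero_le_one
    ((continuous_dhSm τ θ).intervalIntegrable 0 1) (intervalIntegrable_const (μ := volume))
    fun u hu => dhSm_le_neg_one_div_four_mul (by linarith) (hdist u hu)

theorem varDh_le (hτ : 0 < τ) (θ : ℝ) : varDh τ θ ≤ (1 / (2 * τ)) ^ 2 := by
  have hsq (u : ℝ) : dhSm τ u θ ^ 2 ≤ (1 / (2 * τ)) ^ 2 :=
    sq_le_sq' (neg_one_div_two_mul_le_dhSm hτ u θ)
      ((dhSm_nonpos hτ.le u θ).trans (by positivity))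
  have hsecond : ∫ u in (0 : ℝ)..1, dhSm τ u θ ^ 2 ≤ (1 / (2 * τ)) ^ 2 := by
    simpa using intervalIntegral.integral_mono_on zero_le_one
      (((continuous_dhSm τ θ).pow 2).intervalIntegrable 0 1)
      (intervalIntegrable_const (μ := volume)) fun u _ => hsq u
  unfold varDh
  linarith [sq_nonneg (meanDh τ θ)]

end Bounds

/-- For `θ ∈ (0,1)` and `N ≤ 1/(4θ(1−θ)) − 1`, there is a temperature `τ̃ > 0` for which the
MSE of the `N`-sample Smoothed-Autodiff estimator is strictly smaller than the MSE
`(1/N)·(1/(θ(1−θ)) − 4)` of the `N`-sample REINFORCE estimator. -/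
theorem smoothed_autodiff_beats_reinforce
    (θ : ℝ) (hθ : θ ∈ Set.Ioo (0:ℝ) 1) (N : ℕ) (hN : 0 < N)
    (hNle : (N : ℝ) ≤ 1 / (4 * θ * (1 - θ)) - 1) :
    ∃ τ : ℝ, 0 < τ ∧
      (meanDh τ θ + 2) ^ 2 + (1 / (N : ℝ)) * varDh τ θ
        < (1 / (N : ℝ)) * (1 / (θ * (1 - θ)) - 4) := by
  refine ⟨1, one_pos, ?_⟩
  have hNpos : (0 : ℝ) < N := Nat.cast_pos.2 hN
  have hreinforce := four_le_one_div_mul_one_div_sub_four hNpos (p := θ * (1 - θ))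
    (by rwa [← mul_assoc])
  have hmean_lb := neg_one_div_two_mul_le_meanDh one_pos θ
  have hmean_ub := meanDh_le_neg_one_div_four_mul le_rfl (Set.Ioo_subset_Icc_self hθ)
  have hvar := varDh_le one_pos θ
  have hN_inv : 1 / (N : ℝ) ≤ 1 := (div_le_one hNpos).2 (Nat.one_le_cast.2 hN)
  norm_num at hmean_lb hmean_ub hvar
  nlinarith [one_div_pos.2 hNpos]
end

section
/- Fix a positive integer N. For θ = 1/k with integer k ≥ 2 (and likewise for θ = 1 − 1/k), the mean squared error of the N-sample REINFORCE estimator equals (1/N)·(k²/(k−1) − 4); in particular it is at least (k−4)/N and tends to +∞ as k → ∞, i.e., it is Ω(k). -/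
open Filter

/-- `E[R]` for the single-sample REINFORCE random variable `R`, which equals `−1/θ` with
probability `θ` and `−1/(1−θ)` with probability `1−θ`. -/
noncomputable def ER (θ : ℝ) : ℝ := θ * (-1 / θ) + (1 - θ) * (-1 / (1 - θ))

/-- `Var(R)` for the single-sample REINFORCE random variable. -/
noncomputable def VarR (θ : ℝ) : ℝ :=
  θ * (-1 / θ) ^ 2 + (1 - θ) * (-1 / (1 - θ)) ^ 2 - (ER θ) ^ 2

/-- MSE of the `N`-sample REINFORCE estimator against the true gradient `−2`;
since the estimator is unbiased this equals `Var(R)/N`. -/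
noncomputable def reinforceMSE (N : ℕ) (θ : ℝ) : ℝ := VarR θ / N

/-! The second moment of `R` is `1/θ + 1/(1-θ) = 1/(θ(1-θ))` and its mean is `-2`, so
`Var R = 1/(θ(1-θ)) - 4`, which at `θ = 1/k` is `k²/(k-1) - 4 ≥ k - 4`. Exchanging `θ` and
`1 - θ` only swaps the two outcomes of `R`, so `θ = 1 - 1/k` gives the same value. -/

section

variable {θ : ℝ}

theorem ER_eq_neg_two (hθ₀ : θ ≠ 0) (hθ₁ : θ ≠ 1) : ER θ = -2 := by
  have : 1 - θ ≠ 0 := sub_ne_zero.2 hθ₁.symm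
  rw [ER, mul_div_cancel₀ _ hθ₀, mul_div_cancel₀ _ this]
  norm_num

theorem VarR_eq (hθ₀ : θ ≠ 0) (hθ₁ : θ ≠ 1) : VarR θ = 1 / (θ * (1 - θ)) - 4 := by
  have : 1 - θ ≠ 0 := sub_ne_zero.2 hθ₁.symm
  rw [VarR, ER_eq_neg_two hθ₀ hθ₁]
  field_simp
  ring

theorem VarR_one_sub (θ : ℝ) : VarR (1 - θ) = VarR θ := by
  simp only [VarR, ER, sub_sub_cancel]
  ring

theorem reinforceMSE_one_sub (N : ℕ) (θ : ℝ) : reinforceMSE N (1 - θ) = reinforceMSE N θ := by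
  rw [reinforceMSE, reinforceMSE, VarR_one_sub]

end

section

variable {k : ℝ}

theorem VarR_one_div (hk₀ : k ≠ 0) (hk₁ : k ≠ 1) : VarR (1 / k) = k ^ 2 / (k - 1) - 4 := by
  have : k - 1 ≠ 0 := sub_ne_zero.2 hk₁
  rw [VarR_eq (one_div_ne_zero hk₀) (by simpa [one_div] using hk₁)]
  field_simp

theorem le_sq_div_sub_one (hk : 1 < k) : k ≤ k ^ 2 / (k - 1) := by
  rw [le_div_iff₀ (sub_pos.2 hk)]
  nlinarith

theorem sub_four_le_VarR_one_div (hk : 1 < k) : k - 4 ≤ VarR (1 / k) := by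
  rw [VarR_one_div (by positivity) hk.ne']
  linarith [le_sq_div_sub_one hk]

end

theorem tendsto_VarR_one_div_natCast :
    Tendsto (fun k : ℕ => VarR (1 / (k : ℝ))) atTop atTop := by
  refine tendsto_atTop_mono' atTop ?_
    (tendsto_atTop_add_const_right atTop (-4) tendsto_natCast_atTop_atTop)
  filter_upwards [eventually_ge_atTop 2] with k hk
  exact sub_four_le_VarR_one_div (by exact_mod_cast hk)

/-- For `θ = 1/k` (and likewise `θ = 1 − 1/k`) with `k ≥ 2`, the MSE of the `N`-sample
REINFORCE estimator equals `(1/N)·(k²/(k−1) − 4)`, is at least `(k−4)/N`, and tends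
to `+∞` as `k → ∞`, i.e., it is `Ω(k)`. -/
theorem reinforce_mse_omega_k (N : ℕ) (hN : 0 < N) :
    (∀ k : ℕ, 2 ≤ k →
        reinforceMSE N (1 / (k : ℝ)) = (1 / (N : ℝ)) * ((k : ℝ) ^ 2 / ((k : ℝ) - 1) - 4) ∧
        ((k : ℝ) - 4) / (N : ℝ) ≤ reinforceMSE N (1 / (k : ℝ)) ∧
        reinforceMSE N (1 - 1 / (k : ℝ)) = (1 / (N : ℝ)) * ((k : ℝ) ^ 2 / ((k : ℝ) - 1) - 4) ∧
        ((k : ℝ) - 4) / (N : ℝ) ≤ reinforceMSE N (1 - 1 / (k : ℝ))) ∧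
    Tendsto (fun k : ℕ => reinforceMSE N (1 / (k : ℝ))) atTop atTop ∧
    Tendsto (fun k : ℕ => reinforceMSE N (1 - 1 / (k : ℝ))) atTop atTop := by
  have hdiv : Tendsto (fun k : ℕ => reinforceMSE N (1 / (k : ℝ))) atTop atTop :=
    tendsto_VarR_one_div_natCast.atTop_div_const (Nat.cast_pos.2 hN)
  refine ⟨fun k hk => ?_, hdiv, by simpa only [reinforceMSE_one_sub] using hdiv⟩
  have hk : (1 : ℝ) < k := by exact_mod_cast hk
  have hvalue : reinforceMSE N (1 / (k : ℝ)) = 1 / (N : ℝ) * ((k : ℝ) ^ 2 / ((k : ℝ) - 1) - 4) := by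
    rw [reinforceMSE, VarR_one_div (by positivity) hk.ne', one_div_mul_eq_div]
  have hbound : ((k : ℝ) - 4) / N ≤ reinforceMSE N (1 / (k : ℝ)) :=
    div_le_div_of_nonneg_right (sub_four_le_VarR_one_div hk) N.cast_nonneg
  rw [reinforceMSE_one_sub]
  exact ⟨hvalue, hbound, hvalue, hbound⟩
end

section
/- For every τ > 0, the map θ ↦ ∫₀¹ h_τ(u,θ) du is differentiable on (0,1) with derivative 2·(1/(1 + exp((1−θ)/τ)) − 1/(1 + exp(−θ/τ))), and this derivative equals ∫₀¹ ∂_θ h_τ(u,θ) du. -/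
open Real MeasureTheory

/-! Both integrands are functions of `x = (u - θ) / τ` alone: with the logistic function
`σ x = exp x / (exp x + 1)`, whose primitive is `log (exp x + 1)`, one has
`h_τ = 2 σ x - 1` and `∂_θ h_τ = -(2 / τ) σ' x`. Integrating in `u` by the fundamental
theorem of calculus gives closed forms for both integrals, and differentiating the first in
`θ` gives the second. -/

theorem hasDerivAt_log_exp_add_one (x : ℝ) :
    HasDerivAt (fun x => log (exp x + 1)) (exp x / (exp x + 1)) x :=
  ((hasDerivAt_exp x).add_const 1).log (by positivity)

theorem hasDerivAt_exp_div_exp_add_one (x : ℝ) :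
    HasDerivAt (fun x => exp x / (exp x + 1)) (exp x / (exp x + 1) ^ 2) x :=
  ((hasDerivAt_exp x).div ((hasDerivAt_exp x).add_const 1) (by positivity)).congr_deriv (by ring)

section Rescaled

variable {f f' : ℝ → ℝ} (hf : ∀ x, HasDerivAt f (f' x) x) (τ : ℝ)
include hf

theorem hasDerivAt_comp_sub_const_div (θ u : ℝ) :
    HasDerivAt (fun u => f ((u - θ) / τ)) (f' ((u - θ) / τ) / τ) u :=
  ((hf _).comp u (((hasDerivAt_id u).sub_const θ).div_const τ)).congr_deriv
    (by simp only [id_eq, one_div]; ring)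

theorem hasDerivAt_comp_const_sub_div (u θ : ℝ) :
    HasDerivAt (fun θ => f ((u - θ) / τ)) (-(f' ((u - θ) / τ) / τ)) θ :=
  ((hf _).comp θ (((hasDerivAt_id θ).const_sub u).div_const τ)).congr_deriv
    (by simp only [id_eq]; ring)

end Rescaled

theorem hSm_eq (τ u θ : ℝ) :
    hSm τ u θ = 2 * (exp ((u - θ) / τ) / (exp ((u - θ) / τ) + 1)) - 1 := by
  have : exp ((u - θ) / τ) + 1 ≠ 0 := by positivity
  rw [hSm]
  field_simp
  ring

theorem dhSm_eq (τ u θ : ℝ) :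
    dhSm τ u θ = -2 * (exp ((u - θ) / τ) / (exp ((u - θ) / τ) + 1) ^ 2 / τ) := by
  rw [dhSm]
  ring

theorem integral_hSm {τ : ℝ} (hτ : τ ≠ 0) (θ : ℝ) :
    ∫ u in (0:ℝ)..1, hSm τ u θ
      = 2 * τ * (log (exp ((1 - θ) / τ) + 1) - log (exp (-θ / τ) + 1)) - 1 := by
  have hderiv (u : ℝ) : HasDerivAt (fun u => 2 * τ * log (exp ((u - θ) / τ) + 1) - u)
      (hSm τ u θ) u := by
    refine (((hasDerivAt_comp_sub_const_div hasDerivAt_log_exp_add_one τ θ u).const_mul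
      (2 * τ)).sub (hasDerivAt_id u)).congr_deriv ?_
    rw [hSm_eq]
    field_simp
  have hcont : Continuous fun u => hSm τ u θ := by
    unfold hSm
    fun_prop (disch := exact fun _ => by positivity)
  rw [intervalIntegral.integral_eq_sub_of_hasDerivAt (fun u _ => hderiv u)
    (hcont.intervalIntegrable _ _), zero_sub]
  ring

theorem integral_dhSm (τ θ : ℝ) :
    ∫ u in (0:ℝ)..1, dhSm τ u θ
      = -2 * (exp ((1 - θ) / τ) / (exp ((1 - θ) / τ) + 1)
          - exp (-θ / τ) / (exp (-θ / τ) + 1)) := by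
  have hderiv (u : ℝ) :
      HasDerivAt (fun u => -2 * (exp ((u - θ) / τ) / (exp ((u - θ) / τ) + 1)))
        (dhSm τ u θ) u := by
    rw [dhSm_eq]
    exact (hasDerivAt_comp_sub_const_div hasDerivAt_exp_div_exp_add_one τ θ u).const_mul _
  have hcont : Continuous fun u => dhSm τ u θ := by
    unfold dhSm
    fun_prop (disch := exact fun _ => by positivity)
  rw [intervalIntegral.integral_eq_sub_of_hasDerivAt (fun u _ => hderiv u)
    (hcont.intervalIntegrable _ _), zero_sub]
  ring

theorem hasDerivAt_integral_hSm_integral_dhSm {τ : ℝ} (hτ : τ ≠ 0) (θ : ℝ) :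
    HasDerivAt (fun t => ∫ u in (0:ℝ)..1, hSm τ u t)
      (∫ u in (0:ℝ)..1, dhSm τ u θ) θ := by
  have h₁ := hasDerivAt_comp_const_sub_div hasDerivAt_log_exp_add_one τ 1 θ
  have h₀ := hasDerivAt_comp_const_sub_div hasDerivAt_log_exp_add_one τ 0 θ
  simp only [zero_sub] at h₀
  simp_rw [integral_hSm hτ, integral_dhSm]
  refine (((h₁.sub h₀).const_mul (2 * τ)).sub_const 1).congr_deriv ?_
  field_simp
  ring

theorem hasDerivAt_integral_hSm_general (τ : ℝ) (hτ : 0 < τ) (θ : ℝ) :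
    HasDerivAt (fun t : ℝ => ∫ u in (0:ℝ)..1, hSm τ u t)
      (2 * (1 / (1 + Real.exp ((1 - θ) / τ)) - 1 / (1 + Real.exp (-θ / τ)))) θ ∧
    2 * (1 / (1 + Real.exp ((1 - θ) / τ)) - 1 / (1 + Real.exp (-θ / τ)))
      = ∫ u in (0:ℝ)..1, dhSm τ u θ := by
  have hderiv := hasDerivAt_integral_hSm_integral_dhSm hτ.ne' θ
  have hvalue : 2 * (1 / (1 + exp ((1 - θ) / τ)) - 1 / (1 + exp (-θ / τ)))
      = ∫ u in (0:ℝ)..1, dhSm τ u θ := by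
    rw [integral_dhSm]
    field_simp
    ring
  exact ⟨hvalue ▸ hderiv, hvalue⟩

/-- For every `τ > 0`, the map `θ ↦ ∫₀¹ h_τ(u,θ) du` is differentiable on `(0,1)` with
derivative `2·(1/(1 + exp((1−θ)/τ)) − 1/(1 + exp(−θ/τ)))`, and this derivative equals
`∫₀¹ ∂_θ h_τ(u,θ) du`. -/
theorem hasDerivAt_integral_hSm (τ : ℝ) (hτ : 0 < τ) (θ : ℝ) (hθ : θ ∈ Set.Ioo (0:ℝ) 1) :
    HasDerivAt (fun t : ℝ => ∫ u in (0:ℝ)..1, hSm τ u t)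
      (2 * (1 / (1 + Real.exp ((1 - θ) / τ)) - 1 / (1 + Real.exp (-θ / τ)))) θ ∧
    2 * (1 / (1 + Real.exp ((1 - θ) / τ)) - 1 / (1 + Real.exp (-θ / τ)))
      = ∫ u in (0:ℝ)..1, dhSm τ u θ :=
  hasDerivAt_integral_hSm_general τ hτ θ
end

section
/- For each θ ∈ (0,1) and τ > 0, the squared bias of the Smoothed-Autodiff gradient, (∫₀¹ ∂_θ h_τ(u,θ) du + 2)², equals 4·(1 + 1/(1 + exp((1−θ)/τ)) − 1/(1 + exp(−θ/τ)))²; moreover this quantity is strictly less than 4 for every τ > 0 and converges to 4 as τ → ∞. -/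
open Real Filter MeasureTheory

/-! As a function of `u`, `∂_θ h_τ(u, θ)` is the derivative of
`2 / (exp((u−θ)/τ) + 1)`, so the mean is a difference of two logistic values. Since
`exp(−θ/τ) < exp((1−θ)/τ)`, the bias `1 + 1/(1 + exp((1−θ)/τ)) − 1/(1 + exp(−θ/τ))` lies
in `(0, 1)`, and as `τ → ∞` both exponentials tend to `1`, so the mean tends to `0`. -/

theorem hasDerivAt_two_mul_inv_exp_add_one (τ θ u : ℝ) :
    HasDerivAt (fun u : ℝ => 2 * (Real.exp ((u - θ) / τ) + 1)⁻¹) (dhSm τ u θ) u := by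
  have hexp : HasDerivAt (fun u : ℝ => Real.exp ((u - θ) / τ) + 1)
      (Real.exp ((u - θ) / τ) * (1 / τ)) u := by
    have hlin : HasDerivAt (fun u : ℝ => (u - θ) / τ) (1 / τ) u := by
      simpa using ((hasDerivAt_id u).sub_const θ).div_const τ
    exact hlin.exp.add_const 1
  refine ((hexp.inv (by positivity)).const_mul 2).congr_deriv ?_
  rw [dhSm]
  ring

theorem meanDh_eq (τ θ : ℝ) :
    meanDh τ θ = 2 / (1 + Real.exp ((1 - θ) / τ)) - 2 / (1 + Real.exp (-θ / τ)) := by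
  have hint : IntervalIntegrable (fun u => dhSm τ u θ) volume 0 1 := by
    refine Continuous.intervalIntegrable ?_ 0 1
    simp only [dhSm]
    exact Continuous.div (by fun_prop) (by fun_prop) (fun u => pow_ne_zero 2 (by positivity))
  rw [meanDh, intervalIntegral.integral_eq_sub_of_hasDerivAt
    (fun u _ => hasDerivAt_two_mul_inv_exp_add_one τ θ u) hint]
  simp only [zero_sub, div_eq_mul_inv]
  ring

theorem sq_one_add_one_div_sub_one_div_lt_one {a b : ℝ} (hb : 0 < b) (hba : b < a) :
    (1 + 1 / (1 + a) - 1 / (1 + b)) ^ 2 < 1 := by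
  have hab : 1 / (1 + a) < 1 / (1 + b) := one_div_lt_one_div_of_lt (by linarith) (by linarith)
  have hb1 : 1 / (1 + b) < 1 := (div_lt_one (by linarith)).2 (by linarith)
  have ha0 : 0 < 1 / (1 + a) := one_div_pos.2 (by linarith)
  rw [sq_lt_one_iff_abs_lt_one, abs_lt]
  constructor <;> linarith

theorem tendsto_meanDh_atTop (θ : ℝ) : Tendsto (fun τ => meanDh τ θ) atTop (nhds 0) := by
  have hcont : Continuous
      (fun x : ℝ => 2 / (1 + Real.exp ((1 - θ) * x)) - 2 / (1 + Real.exp (-θ * x))) :=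
    (continuous_const.div (by fun_prop) (fun x => by positivity)).sub
      (continuous_const.div (by fun_prop) (fun x => by positivity))
  have hlim := (hcont.tendsto 0).comp tendsto_inv_atTop_zero
  norm_num [Function.comp_def] at hlim
  simpa only [meanDh_eq, div_eq_mul_inv, neg_mul] using hlim

theorem smoothed_autodiff_bias_general (θ : ℝ) :
    (∀ τ : ℝ, 0 < τ →
      (meanDh τ θ + 2) ^ 2 =
        4 * (1 + 1 / (1 + Real.exp ((1 - θ) / τ)) - 1 / (1 + Real.exp (-θ / τ))) ^ 2 ∧
      (meanDh τ θ + 2) ^ 2 < 4) ∧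
    Tendsto (fun τ : ℝ => (meanDh τ θ + 2) ^ 2) atTop (nhds 4) := by
  refine ⟨fun τ hτ => ?_, ?_⟩
  · have hbias : (meanDh τ θ + 2) ^ 2 =
        4 * (1 + 1 / (1 + Real.exp ((1 - θ) / τ)) - 1 / (1 + Real.exp (-θ / τ))) ^ 2 := by
      rw [meanDh_eq]
      ring
    have hexp : Real.exp (-θ / τ) < Real.exp ((1 - θ) / τ) :=
      exp_lt_exp.2 (div_lt_div_of_pos_right (by linarith) hτ)
    have hlt := sq_one_add_one_div_sub_one_div_lt_one (exp_pos _) hexp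
    exact ⟨hbias, by linarith⟩
  · have hlim := ((tendsto_meanDh_atTop θ).add_const 2).pow 2
    norm_num at hlim
    exact hlim

/-- For `θ ∈ (0,1)`: the squared bias `(∫₀¹ ∂_θ h_τ(u,θ) du + 2)²` of the Smoothed-Autodiff
gradient equals `4·(1 + 1/(1 + exp((1−θ)/τ)) − 1/(1 + exp(−θ/τ)))²`; it is strictly less
than `4` for every `τ > 0`; and it converges to `4` as `τ → ∞`. -/
theorem smoothed_autodiff_bias (θ : ℝ) (hθ : θ ∈ Set.Ioo (0:ℝ) 1) :
    (∀ τ : ℝ, 0 < τ →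
      (meanDh τ θ + 2) ^ 2 =
        4 * (1 + 1 / (1 + Real.exp ((1 - θ) / τ)) - 1 / (1 + Real.exp (-θ / τ))) ^ 2 ∧
      (meanDh τ θ + 2) ^ 2 < 4) ∧
    Tendsto (fun τ : ℝ => (meanDh τ θ + 2) ^ 2) atTop (nhds 4) :=
  smoothed_autodiff_bias_general θ
end

section
/- With Z = (Z_1,…,Z_m) having i.i.d. Gumbel(0,1) coordinates: for every i ∈ {1,…,m}, lim_{τ→∞} E_Z[∂_{θ_i} G(h_τ(Z,θ))] = 0; consequently the squared bias (E_Z[∂_{θ_i} G(h_τ(Z,θ))] − D_i(θ))² converges to D_i(θ)² as τ → ∞. -/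
open Real Finset Filter MeasureTheory

/-- The Gumbel(0,1) measure on ℝ, with Lebesgue density `exp(−x − exp(−x))`. -/
noncomputable def gumbel : Measure ℝ :=
  volume.withDensity fun x => ENNReal.ofReal (Real.exp (-x - Real.exp (-x)))

/-- The law of `Z = (Z_1,…,Z_m)` with i.i.d. Gumbel(0,1) coordinates. -/
noncomputable def gumbelPi (m : ℕ) : Measure (Fin m → ℝ) :=
  Measure.pi fun _ => gumbel

/-- Softmax weight `w_i^τ(z,θ) = exp((log θ_i + z_i)/τ) / ∑_j exp((log θ_j + z_j)/τ)`. -/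
noncomputable def softW {m : ℕ} (τ : ℝ) (θ z : Fin m → ℝ) (i : Fin m) : ℝ :=
  Real.exp ((Real.log (θ i) + z i) / τ) / ∑ j, Real.exp ((Real.log (θ j) + z j) / τ)

/-- Smoothed action `h_τ(z,θ) = ∑_i a_i · w_i^τ(z,θ)`. -/
noncomputable def hTau {m : ℕ} (τ : ℝ) (a θ z : Fin m → ℝ) : ℝ :=
  ∑ i, a i * softW τ θ z i

/-- Single-sample Smoothed-Autodiff gradient `∂_{θ_i} G(h_τ(z,θ))`. -/
noncomputable def saGrad {m : ℕ} (τ : ℝ) (a : Fin m → ℝ) (G : ℝ → ℝ)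
    (θ : Fin m → ℝ) (i : Fin m) (z : Fin m → ℝ) : ℝ :=
  deriv (fun t : ℝ => G (hTau τ a (Function.update θ i t) z)) (θ i)

/-!
The weights `w^τ(z,θ)` are a softmax of the logits `(log θ_j + z_j)/τ`, and only the `i`-th logit
depends on `θ_i`, with derivative `1/(τ θ_i)`. Moving one logit of a softmax moves its mean at rate
`w_i (a_i - h)`, so by the chain rule
`∂_{θ_i} G(h_τ(z,θ)) = G'(h_τ) · w_i (a_i - h_τ) / (τ θ_i)`.
As `h_τ` is a convex combination of the actions, this is bounded uniformly in `z` by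
`Ḡ · diam{a_j} / (τ θ_i)`; the Gumbel law is a finite measure (its density is at most
`2/(1 + x²)`), so the expectation is `O(1/τ)`.
-/

lemma neg_sub_exp_neg_le_neg_abs (x : ℝ) : -x - exp (-x) ≤ -|x| := by
  rcases le_or_gt 0 x with hx | hx
  · rw [abs_of_nonneg hx]
    linarith [exp_pos (-x)]
  · rw [abs_of_neg hx]
    nlinarith [quadratic_le_exp_of_nonneg (neg_nonneg.2 hx.le)]

lemma exp_neg_sub_exp_neg_le (x : ℝ) : exp (-x - exp (-x)) ≤ 2 * (1 + x ^ 2)⁻¹ := by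
  have hquad : (1 + x ^ 2) / 2 ≤ exp |x| := by
    nlinarith [quadratic_le_exp_of_nonneg (abs_nonneg x), sq_abs x, abs_nonneg x]
  calc exp (-x - exp (-x)) ≤ exp (-|x|) := exp_le_exp.2 (neg_sub_exp_neg_le_neg_abs x)
    _ = (exp |x|)⁻¹ := exp_neg _
    _ ≤ ((1 + x ^ 2) / 2)⁻¹ := inv_anti₀ (by positivity) hquad
    _ = 2 * (1 + x ^ 2)⁻¹ := by rw [inv_div, div_eq_mul_inv]

lemma integrable_exp_neg_sub_exp_neg : Integrable fun x : ℝ => exp (-x - exp (-x)) := by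
  have hcont : Continuous fun x : ℝ => exp (-x - exp (-x)) := by fun_prop
  refine (integrable_inv_one_add_sq.const_mul 2).mono' hcont.aestronglyMeasurable ?_
  filter_upwards with x
  rw [norm_of_nonneg (exp_pos _).le]
  exact exp_neg_sub_exp_neg_le x

instance : IsFiniteMeasure gumbel :=
  isFiniteMeasure_withDensity_ofReal integrable_exp_neg_sub_exp_neg.hasFiniteIntegral

instance (m : ℕ) : IsFiniteMeasure (gumbelPi m) := by
  unfold gumbelPi; infer_instance

section Softmax

variable {ι : Type*} [Fintype ι]

noncomputable def softmaxMean (a c : ι → ℝ) : ℝ :=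
  (∑ j, a j * exp (c j)) / ∑ j, exp (c j)

lemma sum_exp_pos [Nonempty ι] (c : ι → ℝ) : 0 < ∑ j, exp (c j) :=
  Finset.sum_pos (fun _ _ => exp_pos _) univ_nonempty

lemma softmaxMean_mem_convexHull [Nonempty ι] (a c : ι → ℝ) :
    softmaxMean a c ∈ convexHull ℝ (Set.range a) := by
  have hcenter : softmaxMean a c = univ.centerMass (fun j => exp (c j)) a := by
    simp only [softmaxMean, centerMass, smul_eq_mul, div_eq_inv_mul, mul_comm]
  rw [hcenter]
  exact univ.centerMass_mem_convexHull (fun j _ => (exp_pos _).le) (sum_exp_pos c)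
    fun j _ => Set.mem_range_self j

variable [DecidableEq ι]

lemma hasDerivAt_sum_mul_exp_update (a c : ι → ℝ) (i : ι) :
    HasDerivAt (fun s => ∑ j, a j * exp (Function.update c i s j)) (a i * exp (c i)) (c i) := by
  have hcoord := hasDerivAt_pi.1 (hasDerivAt_update c i (c i))
  refine (HasDerivAt.fun_sum fun j _ => ((hcoord j).exp).const_mul (a j)).congr_deriv ?_
  simp [Pi.single_apply]

lemma hasDerivAt_softmaxMean_update (a c : ι → ℝ) (i : ι) :
    HasDerivAt (fun s => softmaxMean a (Function.update c i s))
      (exp (c i) / (∑ j, exp (c j)) * (a i - softmaxMean a c)) (c i) := by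
  have : Nonempty ι := ⟨i⟩
  have hD := hasDerivAt_sum_mul_exp_update 1 c i
  simp only [Pi.one_apply, one_mul] at hD
  have h := (hasDerivAt_sum_mul_exp_update a c i).fun_div hD (by simpa using (sum_exp_pos c).ne')
  simp only [Function.update_eq_self] at h
  refine h.congr_deriv ?_
  have := (sum_exp_pos c).ne'
  unfold softmaxMean
  field_simp

end Softmax

noncomputable def softLogits {m : ℕ} (τ : ℝ) (θ z : Fin m → ℝ) (j : Fin m) : ℝ :=
  (log (θ j) + z j) / τ

lemma hTau_eq_softmaxMean {m : ℕ} (τ : ℝ) (a θ z : Fin m → ℝ) :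
    hTau τ a θ z = softmaxMean a (softLogits τ θ z) := by
  simp only [hTau, softW, softmaxMean, softLogits, Finset.sum_div, mul_div_assoc]

lemma softLogits_update {m : ℕ} (τ : ℝ) (θ z : Fin m → ℝ) (i : Fin m) (t : ℝ) :
    softLogits τ (Function.update θ i t) z =
      Function.update (softLogits τ θ z) i ((log t + z i) / τ) := by
  ext j
  rcases eq_or_ne j i with rfl | hj
  · simp [softLogits]
  · simp [softLogits, hj]

lemma saGrad_eq {m : ℕ} (τ : ℝ) (a : Fin m → ℝ) {G : ℝ → ℝ} {θ : Fin m → ℝ} {i : Fin m}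
    (z : Fin m → ℝ) (hG : DifferentiableAt ℝ G (hTau τ a θ z)) (hθ : θ i ≠ 0) :
    saGrad τ a G θ i z =
      deriv G (hTau τ a θ z) * (softW τ θ z i * (a i - hTau τ a θ z)) * ((θ i)⁻¹ / τ) := by
  have hlogit : HasDerivAt (fun t => (log t + z i) / τ) ((θ i)⁻¹ / τ) (θ i) :=
    ((hasDerivAt_log hθ).add_const (z i)).div_const τ
  have hmean : HasDerivAt (fun t => hTau τ a (Function.update θ i t) z)
      (softW τ θ z i * (a i - hTau τ a θ z) * ((θ i)⁻¹ / τ)) (θ i) := by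
    simp only [hTau_eq_softmaxMean, softLogits_update]
    exact (hasDerivAt_softmaxMean_update a (softLogits τ θ z) i).comp (θ i) hlogit
  have hGat : HasDerivAt G (deriv G (hTau τ a θ z)) (hTau τ a (Function.update θ i (θ i)) z) := by
    rw [Function.update_eq_self]
    exact hG.hasDerivAt
  rw [saGrad, mul_assoc]
  exact (hGat.comp (θ i) hmean).deriv

lemma softW_le_one {m : ℕ} (τ : ℝ) (θ z : Fin m → ℝ) (i : Fin m) : softW τ θ z i ≤ 1 := by
  have : Nonempty (Fin m) := ⟨i⟩
  refine (div_le_one (sum_exp_pos (softLogits τ θ z))).2 ?_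
  exact single_le_sum (f := fun j => exp (softLogits τ θ z j)) (fun _ _ => (exp_pos _).le)
    (mem_univ i)

lemma abs_saGrad_le {m : ℕ} {τ : ℝ} (hτ : 0 < τ) (a : Fin m → ℝ) {G : ℝ → ℝ} {Gbar : ℝ}
    (hG : ∀ x ∈ convexHull ℝ (Set.range a), DifferentiableAt ℝ G x)
    (hG' : ∀ x ∈ convexHull ℝ (Set.range a), |deriv G x| ≤ Gbar)
    {θ : Fin m → ℝ} {i : Fin m} (hθ : 0 < θ i) (z : Fin m → ℝ) :
    |saGrad τ a G θ i z| ≤ Gbar * Metric.diam (Set.range a) * ((θ i)⁻¹ / τ) := by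
  have : Nonempty (Fin m) := ⟨i⟩
  have hmem : hTau τ a θ z ∈ convexHull ℝ (Set.range a) :=
    hTau_eq_softmaxMean τ a θ z ▸ softmaxMean_mem_convexHull a _
  have hai : a i ∈ convexHull ℝ (Set.range a) := subset_convexHull ℝ _ (Set.mem_range_self i)
  have hspread : |a i - hTau τ a θ z| ≤ Metric.diam (Set.range a) := by
    rw [← convexHull_diam]
    exact Metric.dist_le_diam_of_mem
      (isBounded_convexHull.2 (Set.finite_range a).isBounded) hai hmem
  have hw : 0 ≤ softW τ θ z i := by unfold softW; positivity
  have hGbar : 0 ≤ Gbar := (abs_nonneg _).trans (hG' _ hai)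
  rw [saGrad_eq τ a z (hG _ hmem) hθ.ne', abs_mul, abs_mul, abs_mul, abs_of_nonneg hw,
    abs_of_pos (by positivity : 0 < (θ i)⁻¹ / τ)]
  calc |deriv G (hTau τ a θ z)| * (softW τ θ z i * |a i - hTau τ a θ z|) * ((θ i)⁻¹ / τ)
      ≤ Gbar * (1 * Metric.diam (Set.range a)) * ((θ i)⁻¹ / τ) := by
        gcongr
        exacts [hG' _ hmem, softW_le_one τ θ z i]
    _ = Gbar * Metric.diam (Set.range a) * ((θ i)⁻¹ / τ) := by ring

lemma tendsto_integral_saGrad_atTop {m : ℕ} (μ : Measure (Fin m → ℝ)) [IsFiniteMeasure μ]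
    (a : Fin m → ℝ) {G : ℝ → ℝ} {Gbar : ℝ}
    (hG : ∀ x ∈ convexHull ℝ (Set.range a), DifferentiableAt ℝ G x)
    (hG' : ∀ x ∈ convexHull ℝ (Set.range a), |deriv G x| ≤ Gbar)
    {θ : Fin m → ℝ} {i : Fin m} (hθ : 0 < θ i) :
    Tendsto (fun τ => ∫ z, saGrad τ a G θ i z ∂μ) atTop (nhds 0) := by
  set C := Gbar * Metric.diam (Set.range a) * (θ i)⁻¹ * μ.real Set.univ
  refine squeeze_zero_norm' ?_ (by simpa using tendsto_inv_atTop_zero.const_mul C)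
  filter_upwards [eventually_gt_atTop 0] with τ hτ
  calc ‖∫ z, saGrad τ a G θ i z ∂μ‖
      ≤ Gbar * Metric.diam (Set.range a) * ((θ i)⁻¹ / τ) * μ.real Set.univ :=
        norm_integral_le_of_norm_le_const <| ae_of_all _ fun z =>
          (norm_eq_abs _).trans_le (abs_saGrad_le hτ a hG hG' hθ z)
    _ = C * τ⁻¹ := by ring

theorem smoothed_autodiff_bias_limit_general {m : ℕ} (a : Fin m → ℝ)
    (G : ℝ → ℝ) (hG : Differentiable ℝ G) (Gbar : ℝ)
    (hG' : ∀ x ∈ convexHull ℝ (Set.range a), |deriv G x| ≤ Gbar)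
    (θ : Fin m → ℝ) (hθ : ∀ j, 0 < θ j) (i : Fin m) (Di : ℝ) :
    Tendsto (fun τ : ℝ => ∫ z, saGrad τ a G θ i z ∂(gumbelPi m)) atTop (nhds 0) ∧
    Tendsto (fun τ : ℝ => ((∫ z, saGrad τ a G θ i z ∂(gumbelPi m)) - Di) ^ 2)
      atTop (nhds (Di ^ 2)) := by
  have hlim := tendsto_integral_saGrad_atTop (gumbelPi m) a (fun x _ => hG x) hG' (hθ i)
  exact ⟨hlim, by simpa using (hlim.sub_const Di).pow 2⟩

/-- With `Z` having i.i.d. Gumbel(0,1) coordinates: `E_Z[∂_{θ_i} G(h_τ(Z,θ))] → 0` as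
`τ → ∞`; consequently the squared bias
`(E_Z[∂_{θ_i} G(h_τ(Z,θ))] − D_i(θ))²` converges to `D_i(θ)²`, where
`D_i(θ) = ∂_{θ_i} E_θ[G]`. -/
theorem smoothed_autodiff_bias_limit {m : ℕ} (hm : 2 ≤ m) (a : Fin m → ℝ)
    (G : ℝ → ℝ) (hG : Differentiable ℝ G) (Gbar : ℝ)
    (hG' : ∀ x ∈ convexHull ℝ (Set.range a), |deriv G x| ≤ Gbar)
    (θ : Fin m → ℝ) (hθ : ∀ j, 0 < θ j) (i : Fin m) (Di : ℝ)
    (hD : HasDerivAt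
      (fun t : ℝ => ∑ j, Function.update θ i t j * G (a j) / ∑ k, Function.update θ i t k)
      Di (θ i)) :
    Tendsto (fun τ : ℝ => ∫ z, saGrad τ a G θ i z ∂(gumbelPi m)) atTop (nhds 0) ∧
    Tendsto (fun τ : ℝ => ((∫ z, saGrad τ a G θ i z ∂(gumbelPi m)) - Di) ^ 2)
      atTop (nhds (Di ^ 2)) :=
  smoothed_autodiff_bias_limit_general a G hG Gbar hG' θ hθ i Di
end

section
/- Fix i ∈ {1,…,m}, fix θ_j > 0 for all j ≠ i, and suppose G(a_i) ≠ 0. Then with θ_i = 1/k, the variance Var(R_i) of the single-sample REINFORCE random variable tends to +∞ as k → ∞, growing at rate Ω(k); in particular, for every fixed positive integer N the mean squared error Var(R_i)/N of the N-sample REINFORCE estimator is unbounded as k → ∞. -/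
/-!
With `T = ∑_{j ≠ i} θ_j` and `θ_i = t`, the mean of `R_i` is the exact gradient
`∑_{j ≠ i} θ_j (G(a_i) - G(a_j)) / (t + T)²`, which stays bounded as `t → 0`. The single
outcome `A = a_i` alone contributes `G(a_i)² T² / (t (t + T)³) ≈ G(a_i)² / (t T)` to `E[R_i²]`,
so `Var(R_i) / k` is eventually at least any constant below `G(a_i)² / T` when `t = 1/k`.
-/

open Finset Filter

/-- `S = ∑_j θ_j`. -/
noncomputable def Stot {m : ℕ} (θ : Fin m → ℝ) : ℝ := ∑ j, θ j

/-- Value of the single-sample REINFORCE random variable `R_i = G(A)·∂_{θ_i} log π_θ(A)`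
when the realized action is `A = a_j` (which happens with probability `θ_j / S`). -/
noncomputable def Rval {m : ℕ} (a : Fin m → ℝ) (G : ℝ → ℝ) (θ : Fin m → ℝ)
    (i j : Fin m) : ℝ :=
  if j = i then G (a i) * (1 / θ i - 1 / Stot θ) else -G (a j) / Stot θ

/-- `E[R_i]`, the expectation of the single-sample REINFORCE random variable. -/
noncomputable def ERi {m : ℕ} (a : Fin m → ℝ) (G : ℝ → ℝ) (θ : Fin m → ℝ)
    (i : Fin m) : ℝ :=
  ∑ j, (θ j / Stot θ) * Rval a G θ i j

/-- `Var(R_i) = E[R_i²] − (E[R_i])²`. -/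
noncomputable def VarRi {m : ℕ} (a : Fin m → ℝ) (G : ℝ → ℝ) (θ : Fin m → ℝ)
    (i : Fin m) : ℝ :=
  (∑ j, (θ j / Stot θ) * (Rval a G θ i j) ^ 2) - (ERi a G θ i) ^ 2

open Topology

section
variable {m : ℕ} (a : Fin m → ℝ) (G : ℝ → ℝ)

theorem sum_erase_update (θ : Fin m → ℝ) (i : Fin m) (t : ℝ) (f : Fin m → ℝ → ℝ) :
    ∑ j ∈ univ.erase i, f j (Function.update θ i t j) = ∑ j ∈ univ.erase i, f j (θ j) :=
  sum_congr rfl fun j hj => by rw [Function.update_of_ne (ne_of_mem_erase hj)]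

theorem Stot_update (θ : Fin m → ℝ) (i : Fin m) (t : ℝ) :
    Stot (Function.update θ i t) = t + ∑ j ∈ univ.erase i, θ j := by
  rw [Stot, sum_update_of_mem (mem_univ i), sdiff_singleton_eq_erase]

theorem ERi_eq (θ : Fin m → ℝ) (i : Fin m) (hi : θ i ≠ 0) (hS : Stot θ ≠ 0) :
    ERi a G θ i = (∑ j ∈ univ.erase i, θ j * (G (a i) - G (a j))) / Stot θ ^ 2 := by
  have hSi : Stot θ = θ i + ∑ j ∈ univ.erase i, θ j := (add_sum_erase _ _ (mem_univ i)).symm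
  have hj : ∀ j ∈ univ.erase i,
      θ j / Stot θ * Rval a G θ i j = -(θ j * G (a j)) / Stot θ ^ 2 := by
    intro j hj
    rw [Rval, if_neg (ne_of_mem_erase hj)]
    field_simp
  rw [ERi, ← add_sum_erase _ _ (mem_univ i), sum_congr rfl hj, Rval, if_pos rfl, ← sum_div,
    sum_neg_distrib]
  simp only [mul_sub, sum_sub_distrib, ← sum_mul]
  field_simp
  rw [hSi]
  ring

theorem sub_sq_ERi_le_VarRi (θ : Fin m → ℝ) (i : Fin m) (hθ : ∀ j, 0 ≤ θ j) :
    θ i / Stot θ * Rval a G θ i i ^ 2 - ERi a G θ i ^ 2 ≤ VarRi a G θ i := by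
  have hS : 0 ≤ Stot θ := sum_nonneg fun j _ => hθ j
  rw [VarRi]
  gcongr
  exact single_le_sum (f := fun j => θ j / Stot θ * Rval a G θ i j ^ 2)
    (fun j _ => by have := hθ j; positivity) (mem_univ i)

theorem VarRi_update_ge (θ : Fin m → ℝ) (i : Fin m) (hθ : ∀ j, j ≠ i → 0 ≤ θ j)
    {t : ℝ} (ht : 0 < t) (hT : 0 < ∑ j ∈ univ.erase i, θ j) :
    G (a i) ^ 2 * (∑ j ∈ univ.erase i, θ j) ^ 2 / (t * (t + ∑ j ∈ univ.erase i, θ j) ^ 3)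
        - ERi a G (Function.update θ i t) i ^ 2 ≤ VarRi a G (Function.update θ i t) i := by
  have hθ' : ∀ j, 0 ≤ Function.update θ i t j := by
    intro j
    rcases eq_or_ne j i with rfl | hj
    · simpa using ht.le
    · simpa [Function.update_of_ne hj] using hθ j hj
  convert sub_sq_ERi_le_VarRi a G _ i hθ' using 2
  rw [Rval, if_pos rfl, Stot_update, Function.update_self]
  field_simp
  ring

theorem tendsto_ERi_update (θ : Fin m → ℝ) (i : Fin m) (hT : 0 < ∑ j ∈ univ.erase i, θ j) :
    Tendsto (fun k : ℕ => ERi a G (Function.update θ i (1 / (k : ℝ))) i) atTop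
      (𝓝 ((∑ j ∈ univ.erase i, θ j * (G (a i) - G (a j))) /
        (∑ j ∈ univ.erase i, θ j) ^ 2)) := by
  set T := ∑ j ∈ univ.erase i, θ j
  have hcont : ContinuousAt
      (fun t : ℝ => (∑ j ∈ univ.erase i, θ j * (G (a i) - G (a j))) / (t + T) ^ 2) 0 :=
    continuousAt_const.div ((continuousAt_id.add continuousAt_const).pow 2)
      (by simp only [zero_add]; positivity)
  have hlim := hcont.tendsto.comp (tendsto_one_div_atTop_nhds_zero_nat (𝕜 := ℝ))
  rw [zero_add] at hlim
  refine hlim.congr' ?_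
  filter_upwards [eventually_gt_atTop 0] with k hk
  have ht : (0 : ℝ) < 1 / k := by positivity
  rw [ERi_eq a G _ i (by simpa using ht.ne') (by rw [Stot_update]; positivity), Stot_update,
    sum_erase_update θ i _ fun j x => x * (G (a i) - G (a j))]
  rfl

theorem eventually_mul_le_VarRi_update (θ : Fin m → ℝ) (i : Fin m)
    (hθ : ∀ j, j ≠ i → 0 ≤ θ j) (hT : 0 < ∑ j ∈ univ.erase i, θ j) {c : ℝ}
    (hc : c < G (a i) ^ 2 / ∑ j ∈ univ.erase i, θ j) :
    ∀ᶠ k : ℕ in atTop, c * k ≤ VarRi a G (Function.update θ i (1 / (k : ℝ))) i := by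
  set T := ∑ j ∈ univ.erase i, θ j
  set E := fun k : ℕ => ERi a G (Function.update θ i (1 / (k : ℝ))) i
  have hk0 := tendsto_one_div_atTop_nhds_zero_nat (𝕜 := ℝ)
  have hcont : ContinuousAt (fun t : ℝ => G (a i) ^ 2 * T ^ 2 / (t + T) ^ 3) 0 :=
    continuousAt_const.div ((continuousAt_id.add continuousAt_const).pow 3)
      (by simp only [zero_add]; positivity)
  have hlim : Tendsto
      (fun k : ℕ => G (a i) ^ 2 * T ^ 2 / (1 / (k : ℝ) + T) ^ 3 - E k ^ 2 * (1 / k))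
      atTop (𝓝 (G (a i) ^ 2 / T)) := by
    have := (hcont.tendsto.comp hk0).sub (((tendsto_ERi_update a G θ i hT).pow 2).mul hk0)
    have hval : ∀ L : ℝ, G (a i) ^ 2 * T ^ 2 / (0 + T) ^ 3 - L ^ 2 * 0 = G (a i) ^ 2 / T := by
      intro L
      field_simp
      ring
    rwa [hval] at this
  filter_upwards [hlim.eventually (lt_mem_nhds hc), eventually_gt_atTop 0] with k hlt hk
  have hkpos : (0 : ℝ) < k := by exact_mod_cast hk
  calc c * k ≤ k * (G (a i) ^ 2 * T ^ 2 / (1 / (k : ℝ) + T) ^ 3 - E k ^ 2 * (1 / k)) := by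
        rw [mul_comm]; gcongr
    _ = G (a i) ^ 2 * T ^ 2 / (1 / k * (1 / (k : ℝ) + T) ^ 3) - E k ^ 2 := by
        field_simp
    _ ≤ _ := VarRi_update_ge a G θ i hθ (by positivity) hT

end

/-- Fix `i`, fix `θ_j > 0` for `j ≠ i`, and suppose `G(a_i) ≠ 0`. With `θ_i = 1/k`, the
variance `Var(R_i)` grows at rate `Ω(k)` and tends to `+∞` as `k → ∞`; in particular, for
every fixed `N` the MSE `Var(R_i)/N` of the `N`-sample REINFORCE estimator is unbounded. -/
theorem reinforce_variance_unbounded {m : ℕ} (hm : 2 ≤ m) (a : Fin m → ℝ)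
    (G : ℝ → ℝ) (θ : Fin m → ℝ) (i : Fin m) (hθ : ∀ j, j ≠ i → 0 < θ j)
    (hGi : G (a i) ≠ 0) :
    (∃ c : ℝ, 0 < c ∧ ∀ᶠ k : ℕ in atTop,
        c * (k : ℝ) ≤ VarRi a G (Function.update θ i (1 / (k : ℝ))) i) ∧
    Tendsto (fun k : ℕ => VarRi a G (Function.update θ i (1 / (k : ℝ))) i) atTop atTop ∧
    ∀ N : ℕ, 0 < N →
      Tendsto (fun k : ℕ => VarRi a G (Function.update θ i (1 / (k : ℝ))) i / N)
        atTop atTop := by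
  set T := ∑ j ∈ univ.erase i, θ j
  have hT : 0 < T := sum_pos (fun j hj => hθ j (ne_of_mem_erase hj))
    (card_pos.mp (by rw [card_erase_of_mem (mem_univ i), card_univ, Fintype.card_fin]; omega))
  have hGi2 : 0 < G (a i) ^ 2 := by positivity
  have hc : 0 < G (a i) ^ 2 / (2 * T) := by positivity
  have hlin := eventually_mul_le_VarRi_update a G θ i (fun j hj => (hθ j hj).le) hT
    (c := G (a i) ^ 2 / (2 * T)) (div_lt_div_of_pos_left hGi2 hT (by linarith))
  have htend := tendsto_atTop_mono' atTop hlin (tendsto_natCast_atTop_atTop.const_mul_atTop hc)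
  exact ⟨⟨_, hc, hlin⟩, htend, fun N hN => htend.atTop_div_const (by exact_mod_cast hN)⟩
end
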